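/- arXiv:2503.08432 — 3 statements merged into one kernel-verified Lean document; each statement's English description precedes it below -/
import Mathlib

section
/- Let {s_k} and {a_k} be nonnegative real sequences, {λ_k} ⊂ (0,1), and {b_k} a real sequence with ∑ b_k < ∞. If s_{k+1} ≤ (1−λ_k)s_k + a_k + b_k for all k ≥ 1 and a_k ≤ λ_k C for some constant C ≥ 0, then the sequence {s_k} is bounded. -/
open Finset

/-- Each step is a convex combination of `s k` and `C`, both below the running bound, plus the
perturbation `c k`, so the bound grows only by `c k`. -/
theorem le_max_add_sum_Ico_of_le_convex_add {s c lam : ℕ → ℝ} {C : ℝ} {n : ℕ}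
    (hlam : ∀ k ≥ n, lam k ∈ Set.Icc (0 : ℝ) 1) (hc : ∀ k, 0 ≤ c k)
    (hrec : ∀ k ≥ n, s (k + 1) ≤ (1 - lam k) * s k + lam k * C + c k) :
    ∀ k ≥ n, s k ≤ max (s n) C + ∑ i ∈ Ico n k, c i := by
  intro k hk
  induction k, hk using Nat.le_induction with
  | base => simp
  | succ k hnk ih =>
    obtain ⟨hlam0, hlam1⟩ := hlam k hnk
    set M := max (s n) C + ∑ i ∈ Ico n k, c i
    have hCM : C ≤ M :=
      le_add_of_le_of_nonneg (le_max_right _ _) (sum_nonneg fun i _ => hc i)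
    calc s (k + 1) ≤ (1 - lam k) * s k + lam k * C + c k := hrec k hnk
      _ ≤ (1 - lam k) * M + lam k * M + c k := by gcongr
      _ = max (s n) C + ∑ i ∈ Ico n (k + 1), c i := by
        rw [sum_Ico_succ_top hnk]; ring

theorem le_max_add_tsum_of_le_convex_add {s c lam : ℕ → ℝ} {C : ℝ} {n : ℕ}
    (hlam : ∀ k ≥ n, lam k ∈ Set.Icc (0 : ℝ) 1) (hc : ∀ k, 0 ≤ c k) (hcs : Summable c)
    (hrec : ∀ k ≥ n, s (k + 1) ≤ (1 - lam k) * s k + lam k * C + c k) :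
    ∀ k ≥ n, s k ≤ max (s n) C + ∑' i, c i := fun k hk =>
  (le_max_add_sum_Ico_of_le_convex_add hlam hc hrec k hk).trans <|
    add_le_add_right (hcs.sum_le_tsum _ fun i _ => hc i) _

theorem stmt_10_general (s a b : ℕ → ℝ) (lam : ℕ → ℝ) (C : ℝ)
    (hlam : ∀ k, lam k ∈ Set.Ioo (0 : ℝ) 1)
    (hb : Summable b)
    (haC : ∀ k, a k ≤ lam k * C)
    (hrec : ∀ k ≥ 1, s (k + 1) ≤ (1 - lam k) * s k + a k + b k) :
    ∃ M : ℝ, ∀ k, s k ≤ M := by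
  have hrec' : ∀ k ≥ 1, s (k + 1) ≤ (1 - lam k) * s k + lam k * C + |b k| := fun k hk => by
    linarith [hrec k hk, haC k, le_abs_self (b k)]
  have htail := le_max_add_tsum_of_le_convex_add (fun k _ => Set.Ioo_subset_Icc_self (hlam k))
    (fun k => abs_nonneg (b k)) hb.abs hrec'
  refine ⟨max (s 0) (max (s 1) C + ∑' i, |b i|), fun k => ?_⟩
  rcases Nat.eq_zero_or_pos k with rfl | hk
  · exact le_max_left _ _
  · exact (htail k hk).trans (le_max_right _ _)

theorem stmt_10 (s a b : ℕ → ℝ) (lam : ℕ → ℝ) (C : ℝ)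
    (hs : ∀ k, 0 ≤ s k) (ha : ∀ k, 0 ≤ a k)
    (hlam : ∀ k, lam k ∈ Set.Ioo (0 : ℝ) 1)
    (hb : Summable b)
    (hC : 0 ≤ C) (haC : ∀ k, a k ≤ lam k * C)
    (hrec : ∀ k ≥ 1, s (k + 1) ≤ (1 - lam k) * s k + a k + b k) :
    ∃ M : ℝ, ∀ k, s k ≤ M :=
  stmt_10_general s a b lam C hlam hb haC hrec
end

section
/- If f : H → ℝ ∪ {+∞} is proper, convex, and lower semicontinuous, then its subdifferential ∂f is a maximal monotone operator. -/
open scoped InnerProductSpace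

/-- Subdifferential of an extended-real-valued function. -/
def subdiff {H : Type*} [NormedAddCommGroup H] [InnerProductSpace ℝ H]
    (f : H → EReal) (u : H) : Set H :=
  {w : H | ∀ v : H, f u + ((inner ℝ w (v - u) : ℝ) : EReal) ≤ f v}

/-!
Monotonicity comes from adding the subgradient inequalities at two points. For maximality we use
Minty's argument: it suffices that every `c` can be written as `z + w` with `w ∈ ∂f z`. Take `z` a
minimizer of `f + ‖· - c‖² / 2`; optimality along segments gives `c - z ∈ ∂f z`. The minimizer
exists because the closed convex epigraph of `f` supports an affine minorant (Hahn–Banach), so the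
infimum is finite, and by the parallelogram law minimizing sequences are Cauchy; closedness of the
epigraph lets us pass to the limit.
-/

open Filter Topology Set

lemma le_of_forall_mem_Ioc_le_add_mul {a b c : ℝ} (h : ∀ t ∈ Ioc (0 : ℝ) 1, a ≤ b + t * c) :
    a ≤ b := by
  have hlim : Tendsto (fun t => b + t * c) (𝓝[>] 0) (𝓝 b) := by
    simpa using (tendsto_nhdsWithin_of_tendsto_nhds
      ((continuous_const.add (continuous_id.mul continuous_const)).tendsto 0) :
        Tendsto (fun t : ℝ => b + t * c) (𝓝[>] 0) (𝓝 (b + 0 * c)))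
  exact ge_of_tendsto hlim (mem_of_superset (Ioc_mem_nhdsGT one_pos) h)

section Epigraph

variable {E : Type*} {f : E → EReal}

def realEpigraph (f : E → EReal) : Set (E × ℝ) := {p | f p.1 ≤ p.2}

@[simp]
lemma mem_realEpigraph {p : E × ℝ} : p ∈ realEpigraph f ↔ f p.1 ≤ p.2 := Iff.rfl

lemma convex_realEpigraph [AddCommGroup E] [Module ℝ E]
    (hconv : ∀ x y : E, ∀ t : ℝ, 0 ≤ t → t ≤ 1 →
      f (t • x + (1 - t) • y) ≤ (t : EReal) * f x + ((1 - t : ℝ) : EReal) * f y) :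
    Convex ℝ (realEpigraph f) := by
  rintro ⟨x, r⟩ hx ⟨y, s⟩ hy a b ha hb hab
  obtain rfl : b = 1 - a := by linarith
  calc f (a • x + (1 - a) • y)
      ≤ (a : EReal) * f x + ((1 - a : ℝ) : EReal) * f y := hconv x y a ha (by linarith)
    _ ≤ (a : EReal) * r + ((1 - a : ℝ) : EReal) * s :=
        add_le_add (mul_le_mul_of_nonneg_left hx (by exact_mod_cast ha))
          (mul_le_mul_of_nonneg_left hy (by exact_mod_cast hb))
    _ = ((a • (x, r) + (1 - a) • (y, s)).2 : ℝ) := by simp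

lemma isClosed_realEpigraph [TopologicalSpace E] (hlsc : LowerSemicontinuous f) :
    IsClosed (realEpigraph f) :=
  hlsc.isClosed_epigraph.preimage
    (continuous_fst.prodMk (continuous_coe_real_ereal.comp continuous_snd))

/-- Hahn–Banach separation of a point below the graph from the closed convex epigraph; the
separating functional is not vertical because the epigraph contains a vertical half-line. -/
theorem exists_affine_le_of_realEpigraph [NormedAddCommGroup E] [NormedSpace ℝ E]
    (hS : Convex ℝ (realEpigraph f)) (hC : IsClosed (realEpigraph f)) {x₀ : E} {r₀ : ℝ}
    (h₀ : f x₀ = r₀) :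
    ∃ (ψ : E →L[ℝ] ℝ) (β : ℝ), ∀ x, ((ψ x + β : ℝ) : EReal) ≤ f x := by
  have hout : (x₀, r₀ - 1) ∉ realEpigraph f := by
    simpa [h₀] using (EReal.coe_lt_coe_iff.2 (sub_one_lt r₀))
  obtain ⟨φ, c, hφx₀, hφS⟩ := geometric_hahn_banach_point_closed hS hC hout
  set ψ := φ.comp (ContinuousLinearMap.inl ℝ E ℝ)
  set a := φ (0, 1)
  have hφ : ∀ x r, φ (x, r) = ψ x + r * a := fun x r => by
    rw [show (x, r) = (x, (0 : ℝ)) + r • ((0 : E), (1 : ℝ)) by simp, map_add, map_smul]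
    simp [ψ, a]
  have ha : 0 < a := by
    have := hφS (x₀, r₀) (by simp [h₀])
    rw [hφ] at this hφx₀
    linarith
  refine ⟨-a⁻¹ • ψ, c / a, fun x => EReal.le_of_forall_lt_iff_le.1 fun r hr => ?_⟩
  have hxr := hφS (x, r) hr.le
  rw [hφ] at hxr
  have : -a⁻¹ * ψ x + c / a = (c - ψ x) / a := by field_simp; ring
  change ((-a⁻¹ * ψ x + c / a : ℝ) : EReal) ≤ r
  rw [this]
  exact_mod_cast (div_le_iff₀ ha).2 (by linarith)

end Epigraph

section Prox

variable {H : Type*} [NormedAddCommGroup H] [InnerProductSpace ℝ H]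

lemma sq_norm_sub_le_of_convex {S : Set (H × ℝ)} (hS : Convex ℝ S) {c : H} {m : ℝ}
    (hm : ∀ p ∈ S, m ≤ p.2 + ‖p.1 - c‖ ^ 2 / 2) {p q : H × ℝ} (hp : p ∈ S) (hq : q ∈ S) :
    ‖p.1 - q.1‖ ^ 2 ≤ 4 * ((p.2 + ‖p.1 - c‖ ^ 2 / 2 - m) + (q.2 + ‖q.1 - c‖ ^ 2 / 2 - m)) := by
  have hmid := hm _ (hS hp hq (by norm_num : (0 : ℝ) ≤ 1 / 2) (by norm_num : (0 : ℝ) ≤ 1 / 2)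
    (by norm_num))
  have hpar := parallelogram_law_with_norm ℝ (p.1 - c) (q.1 - c)
  rw [show p.1 - c - (q.1 - c) = p.1 - q.1 by abel] at hpar
  rw [show ((1 / 2 : ℝ) • p + (1 / 2 : ℝ) • q).1 - c = (1 / 2 : ℝ) • (p.1 - c + (q.1 - c)) by
    simp only [Prod.fst_add, Prod.smul_fst]; module, norm_smul, mul_pow] at hmid
  simp only [Prod.snd_add, Prod.smul_snd, smul_eq_mul] at hmid
  norm_num at hmid
  linarith

/-- The function `(z, r) ↦ r + ‖z - c‖² / 2` is strongly convex in `z`, so its minimizing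
sequences on a convex set are Cauchy in `z`. -/
theorem exists_isMinOn_snd_add_half_sq_norm [CompleteSpace H] {S : Set (H × ℝ)}
    (hS : Convex ℝ S) (hC : IsClosed S) (hne : S.Nonempty) (c : H)
    (hbdd : BddBelow ((fun p : H × ℝ => p.2 + ‖p.1 - c‖ ^ 2 / 2) '' S)) :
    ∃ p ∈ S, IsMinOn (fun p : H × ℝ => p.2 + ‖p.1 - c‖ ^ 2 / 2) S p := by
  set Φ := fun p : H × ℝ => p.2 + ‖p.1 - c‖ ^ 2 / 2
  set m := sInf (Φ '' S)
  have hm : ∀ p ∈ S, m ≤ Φ p := fun p hp => csInf_le hbdd (mem_image_of_mem Φ hp)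
  have hseq : ∀ n : ℕ, ∃ p ∈ S, Φ p < m + 1 / (n + 1) := fun n => by
    obtain ⟨_, ⟨p, hp, rfl⟩, hlt⟩ :=
      exists_lt_of_csInf_lt (hne.image Φ) (lt_add_of_pos_right m Nat.one_div_pos_of_nat)
    exact ⟨p, hp, hlt⟩
  choose p hpS hpm using hseq
  have hΦp : Tendsto (fun n => Φ (p n)) atTop (𝓝 m) := by
    refine tendsto_of_tendsto_of_tendsto_of_le_of_le tendsto_const_nhds ?_
      (fun n => hm _ (hpS n)) (fun n => (hpm n).le)
    simpa using tendsto_const_nhds.add (tendsto_one_div_add_atTop_nhds_zero_nat (𝕜 := ℝ))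
  have hcauchy : CauchySeq fun n => (p n).1 := by
    refine cauchySeq_of_le_tendsto_0 (fun N : ℕ => √(8 * (1 / (N + 1))))
      (fun n k N hn hk => ?_) ?_
    · rw [dist_eq_norm]
      apply Real.le_sqrt_of_sq_le
      have hn' : 1 / ((n : ℝ) + 1) ≤ 1 / (N + 1) := by gcongr
      have hk' : 1 / ((k : ℝ) + 1) ≤ 1 / (N + 1) := by gcongr
      have := sq_norm_sub_le_of_convex hS hm (hpS n) (hpS k)
      have hpn := hpm n
      have hpk := hpm k
      simp only [Φ] at hpn hpk
      linarith
    · simpa using ((tendsto_one_div_add_atTop_nhds_zero_nat (𝕜 := ℝ)).const_mul 8).sqrt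
  obtain ⟨z, hz⟩ := cauchySeq_tendsto_of_complete hcauchy
  have hr : Tendsto (fun n => (p n).2) atTop (𝓝 (m - ‖z - c‖ ^ 2 / 2)) := by
    simpa [Φ] using hΦp.sub (((hz.sub_const c).norm.pow 2).div_const 2)
  refine ⟨(z, m - ‖z - c‖ ^ 2 / 2), hC.mem_of_tendsto (hz.prodMk_nhds hr) (.of_forall hpS),
    fun q hq => ?_⟩
  simpa [Φ] using hm q hq

variable {f : H → EReal}

theorem exists_isMinOn_add_half_sq_norm [CompleteSpace H] (hS : Convex ℝ (realEpigraph f))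
    (hC : IsClosed (realEpigraph f)) {x₀ : H} {r₀ : ℝ} (h₀ : f x₀ = r₀) (c : H) :
    ∃ z, IsMinOn (fun y => f y + ((‖y - c‖ ^ 2 / 2 : ℝ) : EReal)) univ z := by
  obtain ⟨ψ, β, hψ⟩ := exists_affine_le_of_realEpigraph hS hC h₀
  have hbdd : BddBelow ((fun p : H × ℝ => p.2 + ‖p.1 - c‖ ^ 2 / 2) '' realEpigraph f) := by
    refine ⟨β + ψ c - ‖ψ‖ ^ 2 / 2, ?_⟩
    rintro _ ⟨⟨z, r⟩, hzr, rfl⟩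
    have hr : ψ z + β ≤ r := by exact_mod_cast (hψ z).trans hzr
    have hψz : ψ c - ‖ψ‖ * ‖z - c‖ ≤ ψ z := by
      have h := ψ.le_opNorm (z - c)
      rw [Real.norm_eq_abs, map_sub] at h
      linarith [neg_abs_le (ψ z - ψ c)]
    dsimp only
    nlinarith [sq_nonneg (‖ψ‖ - ‖z - c‖)]
  obtain ⟨⟨z, r⟩, hzr, hmin⟩ :=
    exists_isMinOn_snd_add_half_sq_norm hS hC ⟨(x₀, r₀), by simp [h₀]⟩ c hbdd
  refine ⟨z, fun y _ => ?_⟩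
  rcases eq_or_ne (f y) ⊤ with hy | hy
  · simp [hy]
  obtain ⟨s, hs⟩ : ∃ s : ℝ, f y = s :=
    ⟨_, (EReal.coe_toReal hy (ne_bot_of_le_ne_bot (EReal.coe_ne_bot _) (hψ y))).symm⟩
  calc f z + ((‖z - c‖ ^ 2 / 2 : ℝ) : EReal) ≤ r + ((‖z - c‖ ^ 2 / 2 : ℝ) : EReal) :=
        add_le_add_left hzr _
    _ ≤ f y + ((‖y - c‖ ^ 2 / 2 : ℝ) : EReal) := by
        rw [hs]
        exact_mod_cast hmin (show (y, s) ∈ realEpigraph f by simp [hs])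

/-- First-order optimality: moving from the minimizer `z` towards `v` along the segment, the
quadratic term is of second order in the step length. -/
theorem sub_mem_subdiff_of_isMinOn (hS : Convex ℝ (realEpigraph f)) {c z : H}
    (hz : IsMinOn (fun y => f y + ((‖y - c‖ ^ 2 / 2 : ℝ) : EReal)) univ z) :
    c - z ∈ subdiff f z := by
  intro v
  induction hfz : f z using EReal.rec with
  | bot => simp
  | top =>
    have hv : f z + ((‖z - c‖ ^ 2 / 2 : ℝ) : EReal) ≤ f v + ((‖v - c‖ ^ 2 / 2 : ℝ) : EReal) :=
      hz (mem_univ v)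
    rw [hfz, EReal.top_add_coe, top_le_iff] at hv
    rw [EReal.top_add_coe, top_le_iff]
    by_contra hv_top
    exact EReal.add_ne_top hv_top (EReal.coe_ne_top _) hv
  | coe s =>
    refine EReal.le_of_forall_lt_iff_le.1 fun r hr => ?_
    suffices s ≤ r + inner ℝ (z - c) (v - z) by
      have hneg : inner ℝ (c - z) (v - z) = -inner ℝ (z - c) (v - z) := by
        rw [← inner_neg_left, neg_sub]
      exact_mod_cast (by linarith : s + inner ℝ (c - z) (v - z) ≤ r)
    refine le_of_forall_mem_Ioc_le_add_mul (c := ‖v - z‖ ^ 2 / 2) fun t ⟨ht₀, ht₁⟩ => ?_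
    have hseg := hS (show (v, r) ∈ realEpigraph f from hr.le)
      (show (z, s) ∈ realEpigraph f by simp [hfz]) ht₀.le (sub_nonneg.2 ht₁) (add_sub_cancel t 1)
    simp only [mem_realEpigraph, Prod.fst_add, Prod.smul_fst, Prod.snd_add, Prod.smul_snd,
      smul_eq_mul] at hseg
    have hq : ‖t • v + (1 - t) • z - c‖ ^ 2
        = ‖z - c‖ ^ 2 + 2 * t * inner ℝ (z - c) (v - z) + t ^ 2 * ‖v - z‖ ^ 2 := by
      rw [show t • v + (1 - t) • z - c = (z - c) + t • (v - z) by module, norm_add_sq_real,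
        real_inner_smul_right, norm_smul, mul_pow, Real.norm_eq_abs, sq_abs]
      ring
    have : s + ‖z - c‖ ^ 2 / 2 ≤ t * r + (1 - t) * s + ‖t • v + (1 - t) • z - c‖ ^ 2 / 2 := by
      have hmin : f z + ((‖z - c‖ ^ 2 / 2 : ℝ) : EReal) ≤
          f (t • v + (1 - t) • z) + ((‖t • v + (1 - t) • z - c‖ ^ 2 / 2 : ℝ) : EReal) :=
        hz (mem_univ _)
      rw [hfz] at hmin
      exact_mod_cast hmin.trans (add_le_add_left hseg _)
    rw [hq] at this
    refine le_of_mul_le_mul_left ?_ ht₀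
    linarith

end Prox

section MonotoneOperator

variable {H : Type*} [NormedAddCommGroup H] [InnerProductSpace ℝ H]

def IsMonotoneOp (A : H → Set H) : Prop :=
  ∀ x y u v : H, u ∈ A x → v ∈ A y → (0 : ℝ) ≤ (inner ℝ (x - y) (u - v) : ℝ)

/-- Minty's argument: write `x + u = z + w` with `w ∈ B z`; monotonicity of `A` forces `z = x`. -/
theorem IsMonotoneOp.eq_of_subset {A B : H → Set H} (hA : IsMonotoneOp A)
    (hBA : ∀ x, B x ⊆ A x) (hB : ∀ c, ∃ z, c - z ∈ B z) (x : H) : A x = B x := by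
  refine Subset.antisymm (fun u hu => ?_) (hBA x)
  obtain ⟨z, hz⟩ := hB (x + u)
  have hmono := hA x z u _ hu (hBA z hz)
  rw [show u - (x + u - z) = -(x - z) by abel, inner_neg_right, real_inner_self_eq_norm_sq,
    neg_nonneg] at hmono
  obtain rfl : z = x := (sub_eq_zero.1 (norm_eq_zero.1 (pow_eq_zero_iff two_ne_zero |>.1
    (le_antisymm hmono (sq_nonneg _))))).symm
  simpa using hz

theorem isMonotoneOp_subdiff {f : H → EReal} (hbot : ∀ x, f x ≠ ⊥) (hproper : ∃ x, f x ≠ ⊤) :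
    IsMonotoneOp (subdiff f) := by
  have hfin : ∀ {x u : H}, u ∈ subdiff f x → ∃ r : ℝ, f x = r := fun {x u} hu => by
    obtain ⟨w, hw⟩ := hproper
    refine ⟨_, (EReal.coe_toReal (fun htop => hw ?_) (hbot x)).symm⟩
    simpa [htop] using hu w
  intro x y u v hu hv
  obtain ⟨a, ha⟩ := hfin hu
  obtain ⟨b, hb⟩ := hfin hv
  have hxy : a + inner ℝ u (y - x) ≤ b := by exact_mod_cast ha ▸ hb ▸ hu y
  have hyx : b + inner ℝ v (x - y) ≤ a := by exact_mod_cast ha ▸ hb ▸ hv x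
  have : inner ℝ (x - y) (u - v) = -(inner ℝ u (y - x) + inner ℝ v (x - y) : ℝ) := by
    simp only [inner_sub_left, inner_sub_right, real_inner_comm]
    ring
  linarith

end MonotoneOperator

theorem stmt_11 {H : Type*} [NormedAddCommGroup H] [InnerProductSpace ℝ H]
    [CompleteSpace H] (f : H → EReal)
    (hbot : ∀ x, f x ≠ ⊥)
    (hproper : ∃ x, f x ≠ ⊤)
    (hconv : ∀ x y : H, ∀ t : ℝ, 0 ≤ t → t ≤ 1 →
      f (t • x + (1 - t) • y) ≤ (t : EReal) * f x + ((1 - t : ℝ) : EReal) * f y)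
    (hlsc : LowerSemicontinuous f) :
    (∀ x y u v : H, u ∈ subdiff f x → v ∈ subdiff f y →
        (0 : ℝ) ≤ (inner ℝ (x - y) (u - v) : ℝ)) ∧
    (∀ A : H → Set H,
      (∀ x y u v : H, u ∈ A x → v ∈ A y → (0 : ℝ) ≤ (inner ℝ (x - y) (u - v) : ℝ)) →
      (∀ x, subdiff f x ⊆ A x) → ∀ x, A x = subdiff f x) := by
  have hS := convex_realEpigraph hconv
  have hC := isClosed_realEpigraph hlsc
  obtain ⟨x₀, hx₀⟩ := hproper
  have h₀ : f x₀ = (f x₀).toReal := (EReal.coe_toReal hx₀ (hbot x₀)).symm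
  refine ⟨isMonotoneOp_subdiff hbot ⟨x₀, hx₀⟩, fun A hA hsub =>
    IsMonotoneOp.eq_of_subset hA hsub fun c => ?_⟩
  obtain ⟨z, hz⟩ := exists_isMinOn_add_half_sq_norm hS hC h₀ c
  exact ⟨z, sub_mem_subdiff_of_isMinOn hS hz⟩
end

section
/- For vectors u_{k+1}, u_k, u_{k−1}, u_{k−2} in a real Hilbert space and w_k = u_k + θ₁(u_k − u_{k−1}) + θ₂(u_{k−1} − u_{k−2}) with θ₁ ≥ 0 and θ₂ ≤ 0, the inequality ‖u_{k+1} − w_k‖² ≥ (1 − θ₁ − |θ₂|)‖u_{k+1} − u_k‖² + (θ₁² − θ₁ − θ₁|θ₂|)‖u_k − u_{k−1}‖² + (θ₂² − |θ₂| − θ₁|θ₂|)‖u_{k−1} − u_{k−2}‖² holds. -/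
/-!
Write `u_{k+1} - w_k = a + θ₁ • b + |θ₂| • c` with `a = u_{k+1} - u_k`, `b = u_{k-1} - u_k`,
`c = u_{k-1} - u_{k-2}`, so that both weights are nonnegative. Expanding the square, each cross
term `2 λ ⟪x, y⟫` with `λ ≥ 0` is bounded below by `-λ (‖x‖² + ‖y‖²)`.
-/

open RealInnerProductSpace

section

variable {F : Type*} [NormedAddCommGroup F] [InnerProductSpace ℝ F]

theorem neg_add_norm_sq_le_two_mul_inner (x y : F) :
    -(‖x‖ ^ 2 + ‖y‖ ^ 2) ≤ 2 * ⟪x, y⟫ := by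
  have := norm_add_sq_real x y
  nlinarith [sq_nonneg ‖x + y‖]

theorem norm_add_smul_add_smul_sq (x y z : F) (α β : ℝ) :
    ‖x + α • y + β • z‖ ^ 2 = ‖x‖ ^ 2 + α ^ 2 * ‖y‖ ^ 2 + β ^ 2 * ‖z‖ ^ 2
      + α * (2 * ⟪x, y⟫) + β * (2 * ⟪x, z⟫) + α * β * (2 * ⟪y, z⟫) := by
  rw [norm_add_sq_real, norm_add_sq_real, norm_smul, norm_smul, inner_add_left,
    real_inner_smul_left, real_inner_smul_right, real_inner_smul_right, real_inner_smul_right,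
    Real.norm_eq_abs, Real.norm_eq_abs, mul_pow, mul_pow, sq_abs, sq_abs]
  ring

theorem le_norm_add_smul_add_smul_sq (x y z : F) {α β : ℝ} (hα : 0 ≤ α) (hβ : 0 ≤ β) :
    (1 - α - β) * ‖x‖ ^ 2 + (α ^ 2 - α - α * β) * ‖y‖ ^ 2 + (β ^ 2 - β - α * β) * ‖z‖ ^ 2
      ≤ ‖x + α • y + β • z‖ ^ 2 := by
  have hxy := mul_le_mul_of_nonneg_left (neg_add_norm_sq_le_two_mul_inner x y) hα
  have hxz := mul_le_mul_of_nonneg_left (neg_add_norm_sq_le_two_mul_inner x z) hβ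
  have hyz := mul_le_mul_of_nonneg_left (neg_add_norm_sq_le_two_mul_inner y z) (mul_nonneg hα hβ)
  rw [norm_add_smul_add_smul_sq]
  linarith

end

theorem stmt_18_general {H : Type*} [NormedAddCommGroup H] [InnerProductSpace ℝ H]
    (θ₁ θ₂ : ℝ) (hθ₁ : 0 ≤ θ₁) (hθ₂ : θ₂ ≤ 0)
    (u1 u0 um1 um2 : H)
    (w : H) (hw : w = u0 + θ₁ • (u0 - um1) + θ₂ • (um1 - um2)) :
    (1 - θ₁ - |θ₂|) * ‖u1 - u0‖ ^ 2
      + (θ₁ ^ 2 - θ₁ - θ₁ * |θ₂|) * ‖u0 - um1‖ ^ 2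
      + (θ₂ ^ 2 - |θ₂| - θ₁ * |θ₂|) * ‖um1 - um2‖ ^ 2
      ≤ ‖u1 - w‖ ^ 2 := by
  have hsplit : u1 - w = (u1 - u0) + θ₁ • (um1 - u0) + |θ₂| • (um1 - um2) := by
    rw [hw, abs_of_nonpos hθ₂, neg_smul, smul_sub θ₁ um1 u0, smul_sub θ₁ u0 um1]
    abel
  rw [hsplit, ← sq_abs θ₂, ← norm_sub_rev um1 u0]
  exact le_norm_add_smul_add_smul_sq _ _ _ hθ₁ (abs_nonneg θ₂)

theorem stmt_18 {H : Type*} [NormedAddCommGroup H] [InnerProductSpace ℝ H]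
    [CompleteSpace H] (θ₁ θ₂ : ℝ) (hθ₁ : 0 ≤ θ₁) (hθ₂ : θ₂ ≤ 0)
    (u1 u0 um1 um2 : H)
    (w : H) (hw : w = u0 + θ₁ • (u0 - um1) + θ₂ • (um1 - um2)) :
    (1 - θ₁ - |θ₂|) * ‖u1 - u0‖ ^ 2
      + (θ₁ ^ 2 - θ₁ - θ₁ * |θ₂|) * ‖u0 - um1‖ ^ 2
      + (θ₂ ^ 2 - |θ₂| - θ₁ * |θ₂|) * ‖um1 - um2‖ ^ 2
      ≤ ‖u1 - w‖ ^ 2 :=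
  stmt_18_general θ₁ θ₂ hθ₁ hθ₂ u1 u0 um1 um2 w hw
end
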